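/- Let F be a nonzero polynomial with nonnegative real coefficients and F(0) = 0, let H(z) = Σ_{n≥0} h_n z^n be a power series with nonnegative real coefficients whose radius of convergence r(H) satisfies 0 < r(H) < ∞, and let Q(z) = H(F(z)) (a well-defined formal power series, since F has zero constant term). Then the radius of convergence r(Q) of Q satisfies F(r(Q)) = r(H). -/

import Mathlib

open Filter

/-- The radius of convergence `r(A) = (limsup |a_n|^{1/n})⁻¹ ∈ [0, ∞]` of a real power
series with coefficient sequence `a`. -/
noncomputable def radius (a : ℕ → ℝ) : ENNReal :=
  (Filter.limsup (fun n : ℕ => ENNReal.ofReal |a n| ^ ((n : ℝ)⁻¹)) Filter.atTop)⁻¹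

/-!
With nonnegative coefficients, `Σ_n q_n t^n` and `Σ_k h_k F(t)^k` are rearrangements of the same
double series in `[0, ∞]`, so `Q` converges at `t ≥ 0` exactly when `H` converges at `F(t)`.
As `F` is a strictly increasing surjection of `[0, ∞)` onto itself, the convergence threshold of
`Q` is the preimage under `F` of that of `H`.
-/

open Polynomial
open scoped NNReal

theorem radius_eq_radius_ofScalars (a : ℕ → ℝ) :
    radius a = (FormalMultilinearSeries.ofScalars ℝ a).radius := by
  rw [_root_.radius, ← inv_inv (FormalMultilinearSeries.ofScalars ℝ a).radius,
    FormalMultilinearSeries.radius_inv_eq_limsup]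
  congr 2
  funext n
  have : ‖FormalMultilinearSeries.ofScalars ℝ a n‖₊ = ‖a n‖₊ :=
    NNReal.eq (FormalMultilinearSeries.ofScalars_norm ℝ a n)
  rw [this, ENNReal.coe_rpow_of_nonneg _ (by positivity), one_div, ← Real.enorm_eq_ofReal_abs]
  rfl

theorem summable_abs_mul_pow_of_ofReal_lt_radius {a : ℕ → ℝ} {t : ℝ} (ht : 0 ≤ t)
    (hlt : ENNReal.ofReal t < radius a) : Summable fun n => |a n| * t ^ n := by
  lift t to ℝ≥0 using ht
  rw [radius_eq_radius_ofScalars, ENNReal.ofReal_coe_nnreal] at hlt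
  simpa using (FormalMultilinearSeries.ofScalars ℝ a).summable_norm_mul_pow hlt

theorem ofReal_le_radius_of_summable {a : ℕ → ℝ} {t : ℝ} (ht : 0 ≤ t)
    (hs : Summable fun n => |a n| * t ^ n) : ENNReal.ofReal t ≤ radius a := by
  lift t to ℝ≥0 using ht
  rw [radius_eq_radius_ofScalars, ENNReal.ofReal_coe_nnreal]
  exact (FormalMultilinearSeries.ofScalars ℝ a).le_radius_of_summable_norm (by simpa using hs)

theorem radius_eq_ofReal_of_summable {a : ℕ → ℝ} {x : ℝ} (hx : 0 ≤ x)
    (hlt : ∀ t, 0 ≤ t → t < x → Summable fun n => |a n| * t ^ n)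
    (hgt : ∀ t, x < t → ¬Summable fun n => |a n| * t ^ n) :
    radius a = ENNReal.ofReal x := by
  apply le_antisymm
  · by_contra! hxa
    obtain ⟨t, ht, hxt, hta⟩ := ENNReal.lt_iff_exists_real_btwn.mp hxa
    exact hgt t ((ENNReal.ofReal_lt_ofReal_iff_of_nonneg hx).mp hxt)
      (summable_abs_mul_pow_of_ofReal_lt_radius ht hta)
  · by_contra! hax
    obtain ⟨t, ht, hat, htx⟩ := ENNReal.lt_iff_exists_real_btwn.mp hax
    exact (ofReal_le_radius_of_summable ht (hlt t ht
      ((ENNReal.ofReal_lt_ofReal_iff_of_nonneg ht).mp htx))).not_gt hat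

namespace Polynomial

variable {F : ℝ[X]}

theorem coeff_pow_nonneg (hF : ∀ n, 0 ≤ F.coeff n) (k n : ℕ) : 0 ≤ (F ^ k).coeff n := by
  induction k generalizing n with
  | zero => rw [pow_zero, coeff_one]; split_ifs <;> norm_num
  | succ k ih =>
    rw [pow_succ, coeff_mul]
    exact Finset.sum_nonneg fun p _ => mul_nonneg (ih p.1) (hF p.2)

theorem coeff_pow_eq_zero_of_lt (hF : F.coeff 0 = 0) {k n : ℕ} (hnk : n < k) :
    (F ^ k).coeff n = 0 := by
  obtain ⟨G, hG⟩ := pow_dvd_pow_of_dvd (X_dvd_iff.mpr hF) k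
  rw [hG, mul_comm, coeff_mul_X_pow', if_neg (by omega)]

theorem eval_nonneg_of_coeff_nonneg (hF : ∀ n, 0 ≤ F.coeff n) {t : ℝ} (ht : 0 ≤ t) :
    0 ≤ F.eval t := by
  rw [eval_eq_sum_range]
  exact Finset.sum_nonneg fun i _ => mul_nonneg (hF i) (pow_nonneg ht i)

theorem strictMonoOn_eval_of_coeff_nonneg (hF : ∀ n, 0 ≤ F.coeff n) (hdeg : 0 < F.natDegree) :
    StrictMonoOn F.eval (Set.Ici 0) := by
  intro s hs u _ hsu
  dsimp only
  have hlead : 0 < F.leadingCoeff :=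
    (hF _).lt_of_ne' (leadingCoeff_ne_zero.mpr (ne_zero_of_natDegree_gt hdeg))
  rw [eval_eq_sum_range, eval_eq_sum_range]
  refine Finset.sum_lt_sum (fun i _ => ?_) ⟨F.natDegree, Finset.self_mem_range_succ _, ?_⟩
  · exact mul_le_mul_of_nonneg_left (pow_le_pow_left₀ hs hsu.le i) (hF i)
  · exact mul_lt_mul_of_pos_left (pow_lt_pow_left₀ hsu hs hdeg.ne') hlead

theorem surjOn_eval_Ici_of_coeff_nonneg (hF : ∀ n, 0 ≤ F.coeff n) (hdeg : 0 < F.degree) :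
    Set.SurjOn F.eval (Set.Ici 0) (Set.Ici (F.eval 0)) :=
  intermediate_value_Ici F.continuous.continuousOn
    (tendsto_atTop_of_leadingCoeff_nonneg F hdeg (hF _))

theorem natDegree_pos_of_coeff_zero_eq_zero (hF0 : F ≠ 0) (hF : F.coeff 0 = 0) :
    0 < F.natDegree := by
  by_contra! hdeg
  exact hF0 (by rw [eq_C_of_natDegree_le_zero hdeg, hF, C_0])

theorem ofReal_eval_eq_tsum (hF : ∀ n, 0 ≤ F.coeff n) {t : ℝ} (ht : 0 ≤ t) :
    ENNReal.ofReal (F.eval t) = ∑' n, ENNReal.ofReal (F.coeff n * t ^ n) := by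
  rw [eval_eq_sum_range,
    ENNReal.ofReal_sum_of_nonneg fun n _ => mul_nonneg (hF n) (pow_nonneg ht n)]
  refine (tsum_eq_sum fun n hn => ?_).symm
  rw [coeff_eq_zero_of_natDegree_lt (by simpa using hn), zero_mul, ENNReal.ofReal_zero]

end Polynomial

theorem summable_iff_tsum_ofReal_ne_top {ι : Type*} {f : ι → ℝ} (hf : ∀ i, 0 ≤ f i) :
    Summable f ↔ ∑' i, ENNReal.ofReal (f i) ≠ ⊤ :=
  ⟨Summable.tsum_ofReal_ne_top, fun h => by
    simpa only [ENNReal.toReal_ofReal (hf _)] using ENNReal.summable_toReal h⟩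

/-- The `n`-th coefficient of the formal composition `H(F(z))`; the sum may stop at `k = n`
because `F(0) = 0` forces `[z^n] F^k = 0` for `k > n`. -/
noncomputable def compCoeff (h : ℕ → ℝ) (F : ℝ[X]) (n : ℕ) : ℝ :=
  ∑ k ∈ Finset.range (n + 1), h k * (F ^ k).coeff n

section Composition

variable {F : ℝ[X]} {h : ℕ → ℝ}

theorem compCoeff_nonneg (hF : ∀ n, 0 ≤ F.coeff n) (hh : ∀ k, 0 ≤ h k) (n : ℕ) :
    0 ≤ compCoeff h F n :=
  Finset.sum_nonneg fun k _ => mul_nonneg (hh k) (coeff_pow_nonneg hF k n)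

theorem tsum_ofReal_compCoeff_mul_pow (hF : ∀ n, 0 ≤ F.coeff n) (hF0 : F.coeff 0 = 0)
    (hh : ∀ k, 0 ≤ h k) {t : ℝ} (ht : 0 ≤ t) :
    ∑' n, ENNReal.ofReal (compCoeff h F n * t ^ n)
      = ∑' k, ENNReal.ofReal (h k * F.eval t ^ k) := by
  have term_nonneg : ∀ k n, 0 ≤ (F ^ k).coeff n * t ^ n := fun k n =>
    mul_nonneg (coeff_pow_nonneg hF k n) (pow_nonneg ht n)
  have expand_n : ∀ n, ENNReal.ofReal (compCoeff h F n * t ^ n)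
      = ∑' k, ENNReal.ofReal (h k) * ENNReal.ofReal ((F ^ k).coeff n * t ^ n) := fun n => by
    simp_rw [← ENNReal.ofReal_mul (hh _), compCoeff, Finset.sum_mul, mul_assoc,
      ENNReal.ofReal_sum_of_nonneg fun k _ => mul_nonneg (hh k) (term_nonneg k n)]
    refine (tsum_eq_sum fun k hk => ?_).symm
    rw [coeff_pow_eq_zero_of_lt hF0 (by simpa using hk), zero_mul, mul_zero, ENNReal.ofReal_zero]
  have expand_k : ∀ k, ENNReal.ofReal (h k * F.eval t ^ k)
      = ∑' n, ENNReal.ofReal (h k) * ENNReal.ofReal ((F ^ k).coeff n * t ^ n) := fun k => by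
    rw [ENNReal.tsum_mul_left, ← ofReal_eval_eq_tsum (coeff_pow_nonneg hF k) ht, eval_pow,
      ENNReal.ofReal_mul (hh k)]
  simp_rw [expand_n, expand_k]
  exact ENNReal.tsum_comm

theorem summable_abs_compCoeff_mul_pow_iff (hF : ∀ n, 0 ≤ F.coeff n) (hF0 : F.coeff 0 = 0)
    (hh : ∀ k, 0 ≤ h k) {t : ℝ} (ht : 0 ≤ t) :
    (Summable fun n => |compCoeff h F n| * t ^ n) ↔ Summable fun k => |h k| * F.eval t ^ k := by
  simp only [abs_of_nonneg (compCoeff_nonneg hF hh _), abs_of_nonneg (hh _)]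
  rw [summable_iff_tsum_ofReal_ne_top fun n =>
      mul_nonneg (compCoeff_nonneg hF hh n) (pow_nonneg ht n),
    summable_iff_tsum_ofReal_ne_top fun k => mul_nonneg (hh k)
      (pow_nonneg (eval_nonneg_of_coeff_nonneg hF ht) k),
    tsum_ofReal_compCoeff_mul_pow hF hF0 hh ht]

end Composition

theorem radius_comp_polynomial_eq_general (F : Polynomial ℝ) (hF0 : F ≠ 0)
    (hFcoeff : ∀ n : ℕ, 0 ≤ F.coeff n) (hFconst : F.coeff 0 = 0)
    (h : ℕ → ℝ) (hh : ∀ n : ℕ, 0 ≤ h n)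
    (hrH_fin : radius h < ⊤) :
    ∃ x : ℝ, 0 ≤ x ∧
      radius (fun n : ℕ => ∑ k ∈ Finset.range (n + 1), h k * (F ^ k).coeff n)
        = ENNReal.ofReal x ∧
      ENNReal.ofReal (F.eval x) = radius h := by
  change ∃ x : ℝ, 0 ≤ x ∧ radius (compCoeff h F) = _ ∧ _
  set R := (radius h).toReal
  have hR : ENNReal.ofReal R = radius h := ENNReal.ofReal_toReal hrH_fin.ne
  have hdeg : 0 < F.natDegree := natDegree_pos_of_coeff_zero_eq_zero hF0 hFconst
  have hmono := strictMonoOn_eval_of_coeff_nonneg hFcoeff hdeg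
  have hFnonneg {t : ℝ} (ht : 0 ≤ t) := eval_nonneg_of_coeff_nonneg hFcoeff ht
  obtain ⟨x, hx, hFx⟩ : ∃ x ∈ Set.Ici 0, F.eval x = R :=
    surjOn_eval_Ici_of_coeff_nonneg hFcoeff (natDegree_pos_iff_degree_pos.mp hdeg)
      (by simp [← coeff_zero_eq_eval_zero, hFconst, R])
  refine ⟨x, hx, radius_eq_ofReal_of_summable hx (fun t ht htx => ?_) (fun t hxt hs => ?_),
    by rw [hFx, hR]⟩
  · have hFt : ENNReal.ofReal (F.eval t) < radius h := by
      rw [← hR, ENNReal.ofReal_lt_ofReal_iff_of_nonneg (hFnonneg ht), ← hFx]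
      exact hmono ht hx htx
    rw [summable_abs_compCoeff_mul_pow_iff hFcoeff hFconst hh ht]
    exact summable_abs_mul_pow_of_ofReal_lt_radius (hFnonneg ht) hFt
  · have ht : 0 ≤ t := hx.trans hxt.le
    rw [summable_abs_compCoeff_mul_pow_iff hFcoeff hFconst hh ht] at hs
    have hFt := ofReal_le_radius_of_summable (hFnonneg ht) hs
    rw [← hR, ← hFx, ENNReal.ofReal_le_ofReal_iff (hFnonneg hx)] at hFt
    exact (hmono hx ht hxt).not_ge hFt

/-- Lemma I of the unrooting argument: if `F ≠ 0` is a polynomial with nonnegative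
coefficients and `F(0) = 0`, `H` is a power series with nonnegative coefficients and
`0 < r(H) < ∞`, and `Q(z) = H(F(z))` (formal composition, whose `n`-th coefficient is
`Σ_{k≤n} h_k·[z^n]F^k`), then `F(r(Q)) = r(H)`; in particular `r(Q)` is finite. -/
theorem radius_comp_polynomial_eq (F : Polynomial ℝ) (hF0 : F ≠ 0)
    (hFcoeff : ∀ n : ℕ, 0 ≤ F.coeff n) (hFconst : F.coeff 0 = 0)
    (h : ℕ → ℝ) (hh : ∀ n : ℕ, 0 ≤ h n)
    (hrH_pos : 0 < radius h) (hrH_fin : radius h < ⊤) :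
    ∃ x : ℝ, 0 ≤ x ∧
      radius (fun n : ℕ => ∑ k ∈ Finset.range (n + 1), h k * (F ^ k).coeff n)
        = ENNReal.ofReal x ∧
      ENNReal.ofReal (F.eval x) = radius h :=
  radius_comp_polynomial_eq_general F hF0 hFcoeff hFconst h hh hrH_fin
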